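/- arXiv:1104.0291 — 2 statements merged into one kernel-verified Lean document; each statement's English description precedes it below -/
import Mathlib

section
/- The matrix B of the marking-witness transform of an ordered Π-net satisfies BW = A, where W is the incidence matrix of the net and A is the incidence matrix of its reaction graph; in particular, for p ∈ P_i the row B(p) is a witness of the level-i complex containing p, and every ordered Π-net has deficiency zero (is a Π²-net). -/
open Finset

/-- A transition `t` is enabled at marking `m`. -/
def enabledAt {P T : Type*} (Wm : P → T → ℕ) (m : P → ℕ) (t : T) : Prop :=
  ∀ p, Wm p t ≤ m p

/-- Firing transition `t` at marking `m`. -/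
def fireAt {P T : Type*} (Wm Wp : P → T → ℕ) (m : P → ℕ) (t : T) : P → ℕ :=
  fun p => m p - Wm p t + Wp p t

/-- One step of the reachability graph. -/
def step {P T : Type*} (Wm Wp : P → T → ℕ) (m m' : P → ℕ) : Prop :=
  ∃ t, enabledAt Wm m t ∧ m' = fireAt Wm Wp m t

/-- Reachability relation. -/
def reach {P T : Type*} (Wm Wp : P → T → ℕ) : (P → ℕ) → (P → ℕ) → Prop :=
  Relation.ReflTransGen (step Wm Wp)

/-- Input bag of a transition. -/
def preBag {P T : Type*} (Wm : P → T → ℕ) (t : T) : P → ℕ := fun p => Wm p t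

/-- Output bag of a transition. -/
def postBag {P T : Type*} (Wp : P → T → ℕ) (t : T) : P → ℕ := fun p => Wp p t

/-- The finite set of complexes of the net. -/
def complexes {P T : Type*} [Fintype P] [Fintype T] [DecidableEq P]
    (Wm Wp : P → T → ℕ) : Finset (P → ℕ) :=
  (Finset.univ.image (preBag Wm)) ∪ (Finset.univ.image (postBag Wp))

/-- `c` is a complex of the net. -/
def isComplex {P T : Type*} (Wm Wp : P → T → ℕ) (c : P → ℕ) : Prop :=
  (∃ t, c = preBag Wm t) ∨ (∃ t, c = postBag Wp t)

/-- Arc of the reaction graph. -/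
def rarc {P T : Type*} (Wm Wp : P → T → ℕ) (c c' : P → ℕ) : Prop :=
  ∃ t, c = preBag Wm t ∧ c' = postBag Wp t

/-- Weak reversibility: every connected component of the reaction graph is
strongly connected. -/
def weaklyReversible {P T : Type*} (Wm Wp : P → T → ℕ) : Prop :=
  ∀ c c', isComplex Wm Wp c → isComplex Wm Wp c' →
    Relation.ReflTransGen (fun a b => rarc Wm Wp a b ∨ rarc Wm Wp b a) c c' →
    Relation.ReflTransGen (rarc Wm Wp) c c'

/-- An `n`-level ordered Π-net.  Levels are indexed by `Fin n`, index `i`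
standing for level `i+1` of the informal definition.  Every level is a
strongly connected state machine through which the transitions of that level
route exactly one token; transitions of level `i+1` may in addition consume
and produce tokens of level `i`; every level (except the lowest) is connected
to the one below it; two transitions of a level sharing their input (resp.
output) place at that level have equal input (resp. output) bags; and the net
is weakly reversible. -/
structure OrderedPiNet (n : ℕ) (P T : Type*) [Fintype P] [Fintype T]
    [DecidableEq P] [DecidableEq T] where
  Wm : P → T → ℕ
  Wp : P → T → ℕ
  lvlP : P → Fin n
  lvlT : T → Fin n
  lvl_surj : Function.Surjective lvlP
  inPlace : T → P
  outPlace : T → P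
  inPlace_lvl : ∀ t, lvlP (inPlace t) = lvlT t
  outPlace_lvl : ∀ t, lvlP (outPlace t) = lvlT t
  Wm_in : ∀ t, Wm (inPlace t) t = 1
  Wp_out : ∀ t, Wp (outPlace t) t = 1
  Wm_own : ∀ t p, lvlP p = lvlT t → p ≠ inPlace t → Wm p t = 0
  Wp_own : ∀ t p, lvlP p = lvlT t → p ≠ outPlace t → Wp p t = 0
  Wm_below : ∀ t p, Wm p t ≠ 0 → lvlP p = lvlT t ∨ (lvlP p : ℕ) + 1 = (lvlT t : ℕ)
  Wp_below : ∀ t p, Wp p t ≠ 0 → lvlP p = lvlT t ∨ (lvlP p : ℕ) + 1 = (lvlT t : ℕ)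
  connected_below : ∀ i : Fin n, (i : ℕ) ≠ 0 →
    ∃ t p, lvlT t = i ∧ (lvlP p : ℕ) + 1 = (i : ℕ) ∧ Wm p t ≠ 0
  sameIn : ∀ t t', inPlace t = inPlace t' → ∀ p, Wm p t = Wm p t'
  sameOut : ∀ t t', outPlace t = outPlace t' → ∀ p, Wp p t = Wp p t'
  strong : ∀ p q, lvlP p = lvlP q →
    Relation.ReflTransGen (fun a b => ∃ t, inPlace t = a ∧ outPlace t = b) p q
  wr : weaklyReversible Wm Wp

namespace OrderedPiNet

variable {n : ℕ} {P T : Type*} [Fintype P] [Fintype T] [DecidableEq P] [DecidableEq T]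

/-- The potential `pot(p, q)`: the number of tokens `t•(q)` put in `q` by a
common input transition `t` of `p` and `q`, when `q` is one level below `p`,
and `0` otherwise. -/
noncomputable def pot (N : OrderedPiNet n P T) (p q : P) : ℕ :=
  if h : ((N.lvlP q : ℕ) + 1 = (N.lvlP p : ℕ)) ∧ ∃ t, N.outPlace t = p ∧ N.Wp q t ≠ 0
  then N.Wp q h.2.choose else 0

/-- The potential of a place: `pot(p) = ∑_{q} pot(p, q)`. -/
noncomputable def potT (N : OrderedPiNet n P T) (p : P) : ℕ := ∑ q, N.pot p q

/-- The marking witness transform `m ↦ m̃`: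
`m̃(p) = m(p) − ∑_{r one level above p} m̃(r) · pot(r, p)`. -/
noncomputable def mw (N : OrderedPiNet n P T) (m : P → ℤ) (p : P) : ℤ :=
  m p - ∑ r : P, (if h : (N.lvlP p : ℕ) + 1 = (N.lvlP r : ℕ)
    then N.mw m r * (N.pot r p : ℤ) else 0)
termination_by n - (N.lvlP p : ℕ)
decreasing_by
  have h1 : (N.lvlP r : ℕ) < n := (N.lvlP r).isLt
  omega

/-- The row `v_i` of S-invariants applied to a vector: `v_i · x = ∑_{p ∈ P_i} x̃(p)`. -/
noncomputable def vRow (N : OrderedPiNet n P T) (i : Fin n) (x : P → ℤ) : ℤ :=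
  ∑ p ∈ Finset.univ.filter (fun p => N.lvlP p = i), N.mw x p

/-- Number of tokens of `m` in `P_i`. -/
def lvlCount (N : OrderedPiNet n P T) (i : Fin n) (m : P → ℕ) : ℕ :=
  ∑ p ∈ Finset.univ.filter (fun p => N.lvlP p = i), m p

/-- Number of tokens of `m` in `P_{i−1}` (the level just below `i`). -/
def belowCount (N : OrderedPiNet n P T) (i : Fin n) (m : P → ℕ) : ℕ :=
  ∑ p ∈ Finset.univ.filter (fun p => (N.lvlP p : ℕ) + 1 = (i : ℕ)), m p

/-- The level-`i` minimal marked potential `φ_i(m)`. -/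
noncomputable def phi (N : OrderedPiNet n P T) (i : Fin n) (m : P → ℕ) : ℕ :=
  if N.lvlCount i m = 0
  then (Finset.univ.filter (fun p => N.lvlP p = i)).sup N.potT
  else sInf (N.potT '' {p | N.lvlP p = i ∧ m p ≠ 0})

/-- The Π³ condition: every interface place has maximal potential on its level. -/
def isPi3 (N : OrderedPiNet n P T) : Prop :=
  ∀ p t, (N.lvlP p : ℕ) + 1 = (N.lvlT t : ℕ) → N.Wp p t ≠ 0 →
    ∀ q, N.lvlP q = N.lvlP p → N.potT q ≤ N.potT p

/-- One step using only transitions of level index at most `i`. -/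
def stepUpTo (N : OrderedPiNet n P T) (i : Fin n) (m m' : P → ℕ) : Prop :=
  ∃ t, N.lvlT t ≤ i ∧ enabledAt N.Wm m t ∧ m' = fireAt N.Wm N.Wp m t

/-- Reachability using only transitions of level index at most `i` (the set `R_i`). -/
def reachUpTo (N : OrderedPiNet n P T) (i : Fin n) : (P → ℕ) → (P → ℕ) → Prop :=
  Relation.ReflTransGen (N.stepUpTo i)

/-- `i`-liveness. -/
def iLive (N : OrderedPiNet n P T) (i : Fin n) (m : P → ℕ) : Prop :=
  ∀ t, N.lvlT t ≤ i → ∃ m', N.reachUpTo i m m' ∧ enabledAt N.Wm m' t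

/-- The `i`-condition: `m(P_i) > 0` and `m(P_{j−1}) ≥ φ_j(m)` for all levels
`j` with `2 ≤ j ≤ i` (in 1-based numbering). -/
def iCond (N : OrderedPiNet n P T) (i : Fin n) (m : P → ℕ) : Prop :=
  N.lvlCount i m ≠ 0 ∧
  ∀ j : Fin n, 1 ≤ (j : ℕ) → j ≤ i → N.phi j m ≤ N.belowCount j m

end OrderedPiNet


/-! Every complex of an ordered Π-net has a unique place of highest level in its support, and by
weak reversibility an input bag and an output bag coincide exactly when the corresponding input
and output places do; this identifies complexes with places. The transform `m ↦ m̃` is linear and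
is the unique solution of its defining recursion, so its value on the column `W(t)` is found by
checking that the difference of the unit vectors at the output and input place of `t` satisfies
the recursion: on the level of `t` this is the shape of `t`, one level below the potentials of
those two places are exactly the tokens `t` produces and consumes there, and elsewhere
everything vanishes. -/

namespace OrderedPiNet

variable {n : ℕ} {P T : Type*} [Fintype P] [Fintype T] [DecidableEq P] [DecidableEq T]
  (N : OrderedPiNet n P T)

/-- Complexes are identified with places through their top place. -/
def IsTopPlace (c : P → ℕ) (p : P) : Prop :=
  c p ≠ 0 ∧ ∀ q, c q ≠ 0 → q ≠ p → N.lvlP q < N.lvlP p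

variable {N} in
theorem IsTopPlace.unique {c : P → ℕ} {p q : P} (hp : N.IsTopPlace c p)
    (hq : N.IsTopPlace c q) : p = q := by
  by_contra hpq
  exact (hp.2 q hq.1 (Ne.symm hpq)).asymm (hq.2 p hp.1 hpq)

theorem lvlP_lt_lvlT_of_ne_zero {W : P → T → ℕ} {t : T} {p : P}
    (hbelow : ∀ t p, W p t ≠ 0 → N.lvlP p = N.lvlT t ∨ (N.lvlP p : ℕ) + 1 = N.lvlT t)
    (hW : W p t ≠ 0) (hp : N.lvlP p ≠ N.lvlT t) : N.lvlP p < N.lvlT t := by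
  rcases hbelow t p hW with h | h
  · exact absurd h hp
  · exact Fin.lt_def.2 (by omega)

theorem isTopPlace_preBag (t : T) : N.IsTopPlace (preBag N.Wm t) (N.inPlace t) := by
  refine ⟨by simp [preBag, N.Wm_in], fun q hq hne => ?_⟩
  rw [N.inPlace_lvl]
  exact N.lvlP_lt_lvlT_of_ne_zero N.Wm_below hq fun h => hq (N.Wm_own t q h hne)

theorem isTopPlace_postBag (t : T) : N.IsTopPlace (postBag N.Wp t) (N.outPlace t) := by
  refine ⟨by simp [postBag, N.Wp_out], fun q hq hne => ?_⟩
  rw [N.outPlace_lvl]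
  exact N.lvlP_lt_lvlT_of_ne_zero N.Wp_below hq fun h => hq (N.Wp_own t q h hne)

theorem inPlace_eq_of_preBag_eq {t t' : T} (h : preBag N.Wm t = preBag N.Wm t') :
    N.inPlace t = N.inPlace t' :=
  (N.isTopPlace_preBag t).unique (h ▸ N.isTopPlace_preBag t')

theorem outPlace_eq_of_postBag_eq {t t' : T} (h : postBag N.Wp t = postBag N.Wp t') :
    N.outPlace t = N.outPlace t' :=
  (N.isTopPlace_postBag t).unique (h ▸ N.isTopPlace_postBag t')

theorem inPlace_eq_of_preBag_eq_postBag {t t' : T} (h : preBag N.Wm t = postBag N.Wp t') :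
    N.inPlace t = N.outPlace t' :=
  (N.isTopPlace_preBag t).unique (h ▸ N.isTopPlace_postBag t')

theorem preBag_eq_iff {t t' : T} : preBag N.Wm t = preBag N.Wm t' ↔ N.inPlace t = N.inPlace t' :=
  ⟨N.inPlace_eq_of_preBag_eq, fun h => funext (N.sameIn t t' h)⟩

theorem postBag_eq_iff {t t' : T} :
    postBag N.Wp t = postBag N.Wp t' ↔ N.outPlace t = N.outPlace t' :=
  ⟨N.outPlace_eq_of_postBag_eq, fun h => funext (N.sameOut t t' h)⟩

theorem reactionPath_postBag_preBag (t : T) :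
    Relation.ReflTransGen (rarc N.Wm N.Wp) (postBag N.Wp t) (preBag N.Wm t) :=
  N.wr _ _ (Or.inr ⟨t, rfl⟩) (Or.inl ⟨t, rfl⟩) (.single (Or.inr ⟨t, rfl, rfl⟩))

theorem exists_preBag_eq_postBag (t : T) : ∃ u, preBag N.Wm u = postBag N.Wp t := by
  rcases (N.reactionPath_postBag_preBag t).cases_head with h | ⟨_, ⟨u, hu, -⟩, -⟩
  · exact ⟨t, h.symm⟩
  · exact ⟨u, hu.symm⟩

theorem exists_postBag_eq_preBag (t : T) : ∃ u, postBag N.Wp u = preBag N.Wm t := by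
  rcases (N.reactionPath_postBag_preBag t).cases_tail with h | ⟨_, -, u, -, hu⟩
  · exact ⟨t, h.symm⟩
  · exact ⟨u, hu.symm⟩

theorem preBag_eq_postBag_iff {t t' : T} :
    preBag N.Wm t = postBag N.Wp t' ↔ N.inPlace t = N.outPlace t' := by
  refine ⟨N.inPlace_eq_of_preBag_eq_postBag, fun h => ?_⟩
  obtain ⟨u, hu⟩ := N.exists_preBag_eq_postBag t'
  rw [← hu, N.preBag_eq_iff, h, N.inPlace_eq_of_preBag_eq_postBag hu]

theorem exists_topPlace_of_mem_complexes {c : P → ℕ} (hc : c ∈ complexes N.Wm N.Wp) :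
    ∃ p, (∀ t, preBag N.Wm t = c ↔ N.inPlace t = p) ∧
      (∀ t, postBag N.Wp t = c ↔ N.outPlace t = p) := by
  rcases Finset.mem_union.1 hc with h | h <;> obtain ⟨t₀, -, rfl⟩ := Finset.mem_image.1 h
  · exact ⟨N.inPlace t₀, fun t => N.preBag_eq_iff,
      fun t => eq_comm.trans (N.preBag_eq_postBag_iff.trans eq_comm)⟩
  · exact ⟨N.outPlace t₀, fun t => N.preBag_eq_postBag_iff, fun t => N.postBag_eq_iff⟩

theorem pot_outPlace {t : T} {p : P} (h : (N.lvlP p : ℕ) + 1 = N.lvlT t) :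
    N.pot (N.outPlace t) p = N.Wp p t := by
  rw [pot]
  split_ifs with hc
  · exact N.sameOut _ t hc.2.choose_spec.1 p
  · by_contra hne
    exact hc ⟨by rw [N.outPlace_lvl]; exact h, t, rfl, Ne.symm hne⟩

theorem pot_inPlace {t : T} {p : P} (h : (N.lvlP p : ℕ) + 1 = N.lvlT t) :
    N.pot (N.inPlace t) p = N.Wm p t := by
  obtain ⟨u, hu⟩ := N.exists_postBag_eq_preBag t
  have hout : N.outPlace u = N.inPlace t := (N.inPlace_eq_of_preBag_eq_postBag hu.symm).symm
  have hlvl : N.lvlT u = N.lvlT t := by rw [← N.outPlace_lvl, hout, N.inPlace_lvl]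
  rw [← hout, N.pot_outPlace (hlvl ▸ h)]
  exact congrFun hu p

theorem mw_eq (m : P → ℤ) (p : P) :
    N.mw m p = m p - ∑ r, if (N.lvlP p : ℕ) + 1 = N.lvlP r then N.mw m r * N.pot r p else 0 := by
  rw [mw]
  simp only [dite_eq_ite]

theorem eq_mw_of_forall {m f : P → ℤ}
    (hf : ∀ p, f p = m p - ∑ r, if (N.lvlP p : ℕ) + 1 = N.lvlP r then f r * N.pot r p else 0)
    (p : P) : f p = N.mw m p := by
  induction hk : n - (N.lvlP p : ℕ) using Nat.strong_induction_on generalizing p with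
  | _ k ih =>
    rw [hf, mw_eq]
    congr 1
    refine Finset.sum_congr rfl fun r _ => ?_
    split_ifs with hr
    · have := (N.lvlP r).isLt
      rw [ih _ (by omega) r rfl]
    · rfl

theorem sum_mw_single_mul (x : P → ℤ) (p : P) :
    ∑ q, N.mw (fun r => if r = q then 1 else 0) p * x q = N.mw x p := by
  refine N.eq_mw_of_forall (f := fun p => ∑ q, N.mw (fun r => if r = q then 1 else 0) p * x q)
    (fun p => ?_) p
  simp only [N.mw_eq _ p, sub_mul, Finset.sum_sub_distrib, ite_mul, one_mul, zero_mul,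
    Finset.sum_ite_eq, Finset.mem_univ, if_true, Finset.sum_mul]
  rw [Finset.sum_comm]
  congr 1
  refine Finset.sum_congr rfl fun r _ => ?_
  split_ifs
  · exact Finset.sum_congr rfl fun q _ => mul_right_comm _ _ _
  · simp

theorem Wp_eq_zero_of_lvlP_ne {t : T} {p : P} (h : N.lvlP p ≠ N.lvlT t)
    (h' : (N.lvlP p : ℕ) + 1 ≠ N.lvlT t) : N.Wp p t = 0 := by
  by_contra hW
  rcases N.Wp_below t p hW with h₁ | h₁ <;> contradiction

theorem Wm_eq_zero_of_lvlP_ne {t : T} {p : P} (h : N.lvlP p ≠ N.lvlT t)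
    (h' : (N.lvlP p : ℕ) + 1 ≠ N.lvlT t) : N.Wm p t = 0 := by
  by_contra hW
  rcases N.Wm_below t p hW with h₁ | h₁ <;> contradiction

theorem Wp_of_lvlP_eq {t : T} {p : P} (h : N.lvlP p = N.lvlT t) :
    (N.Wp p t : ℤ) = if N.outPlace t = p then 1 else 0 := by
  split_ifs with hp
  · simp [← hp, N.Wp_out]
  · simp [N.Wp_own t p h (Ne.symm hp)]

theorem Wm_of_lvlP_eq {t : T} {p : P} (h : N.lvlP p = N.lvlT t) :
    (N.Wm p t : ℤ) = if N.inPlace t = p then 1 else 0 := by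
  split_ifs with hp
  · simp [← hp, N.Wm_in]
  · simp [N.Wm_own t p h (Ne.symm hp)]

theorem sum_pot_single_sub_single (t : T) (p : P) :
    (∑ r, if (N.lvlP p : ℕ) + 1 = N.lvlP r then
        ((if N.outPlace t = r then 1 else 0) - (if N.inPlace t = r then 1 else 0)) *
          (N.pot r p : ℤ) else 0) =
      if (N.lvlP p : ℕ) + 1 = N.lvlT t then
        (N.pot (N.outPlace t) p : ℤ) - N.pot (N.inPlace t) p else 0 := by
  have split_summand : ∀ r, (if (N.lvlP p : ℕ) + 1 = N.lvlP r then
      ((if N.outPlace t = r then 1 else 0) - (if N.inPlace t = r then 1 else 0)) *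
        (N.pot r p : ℤ) else 0) =
      (if N.outPlace t = r then
        (if (N.lvlP p : ℕ) + 1 = N.lvlP r then (N.pot r p : ℤ) else 0) else 0) -
      (if N.inPlace t = r then
        (if (N.lvlP p : ℕ) + 1 = N.lvlP r then (N.pot r p : ℤ) else 0) else 0) := by
    intro r
    split_ifs <;> simp
  simp only [split_summand, Finset.sum_sub_distrib, Finset.sum_ite_eq, Finset.mem_univ, if_true,
    N.outPlace_lvl, N.inPlace_lvl]
  split_ifs <;> simp

theorem mw_incidence_column (t : T) (p : P) :
    N.mw (fun q => (N.Wp q t : ℤ) - N.Wm q t) p =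
      (if N.outPlace t = p then 1 else 0) - (if N.inPlace t = p then 1 else 0) := by
  refine (N.eq_mw_of_forall (f := fun p =>
    (if N.outPlace t = p then 1 else 0) - (if N.inPlace t = p then 1 else 0))
    (fun p => ?_) p).symm
  rw [N.sum_pot_single_sub_single]
  by_cases hlvl : N.lvlP p = N.lvlT t
  · have hbelow : (N.lvlP p : ℕ) + 1 ≠ N.lvlT t := by rw [hlvl]; omega
    rw [if_neg hbelow, N.Wp_of_lvlP_eq hlvl, N.Wm_of_lvlP_eq hlvl, sub_zero]
  · have hout : N.outPlace t ≠ p := fun h => hlvl (h ▸ N.outPlace_lvl t)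
    have hin : N.inPlace t ≠ p := fun h => hlvl (h ▸ N.inPlace_lvl t)
    rw [if_neg hout, if_neg hin]
    split_ifs with hbelow
    · rw [N.pot_outPlace hbelow, N.pot_inPlace hbelow]
      ring
    · simp [N.Wp_eq_zero_of_lvlP_ne hlvl hbelow, N.Wm_eq_zero_of_lvlP_ne hlvl hbelow]

theorem mw_single_mul_incidence (p : P) (t : T) :
    ∑ q, N.mw (fun r => if r = q then 1 else 0) p * ((N.Wp q t : ℤ) - N.Wm q t) =
      (if N.outPlace t = p then 1 else 0) - (if N.inPlace t = p then 1 else 0) := by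
  rw [N.sum_mw_single_mul, N.mw_incidence_column]

end OrderedPiNet

/-- The matrix `B` of the marking-witness transform (with rows
`B(p) = mw(δ_·)(p)`) satisfies `B W = A`, where `A` is the incidence matrix of
the reaction graph reindexed by places via the bijection sending a level-`i`
complex to its level-`i` place; in particular each row `B(p)` is a witness of
the complex containing `p`, and the net has deficiency zero (is a Π²-net). -/
theorem stmt14 {n : ℕ} {P T : Type*} [Fintype P] [Fintype T] [DecidableEq P]
    [DecidableEq T] (N : OrderedPiNet n P T) :
    (∀ (p : P) (t : T),
      ∑ q, N.mw (fun r => if r = q then 1 else 0) p * ((N.Wp q t : ℤ) - (N.Wm q t : ℤ)) =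
        (if N.outPlace t = p then 1 else 0) - (if N.inPlace t = p then 1 else 0)) ∧
    (∃ B : Matrix {c // c ∈ complexes N.Wm N.Wp} P ℚ,
      ∀ (c : {c // c ∈ complexes N.Wm N.Wp}) (t : T),
        ((if postBag N.Wp t = c.1 then 1 else 0) -
            (if preBag N.Wm t = c.1 then 1 else 0) : ℚ) =
          ∑ p, B c p * ((N.Wp p t : ℚ) - (N.Wm p t : ℚ))) := by
  refine ⟨N.mw_single_mul_incidence, ?_⟩
  choose top hpre hpost using
    fun c : {c // c ∈ complexes N.Wm N.Wp} => N.exists_topPlace_of_mem_complexes c.2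
  refine ⟨fun c q => N.mw (fun r => if r = q then 1 else 0) (top c), fun c t => ?_⟩
  have hrow := congrArg (Int.cast : ℤ → ℚ) (N.mw_single_mul_incidence (top c) t)
  push_cast at hrow
  simp only [hrow, hpre, hpost]
end

section
/- In a Π³-net, the condition 'φ_i(m) ≤ m(P_{i−1})' is preserved by firing: if m →t m' and φ_i(m) ≤ m(P_{i−1}), then φ_i(m') ≤ m'(P_{i−1}); hence it is preserved along all reachable markings. -/
open Finset

section Firing

variable {P T : Type*} {Wm Wp : P → T → ℕ}

theorem le_fireAt (m : P → ℕ) (t : T) (p : P) : Wp p t ≤ fireAt Wm Wp m t p :=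
  Nat.le_add_left _ _

theorem fireAt_apply_of_eq_zero {m : P → ℕ} {t : T} {p : P} (hm : Wm p t = 0)
    (hp : Wp p t = 0) : fireAt Wm Wp m t p = m p := by
  simp [fireAt, hm, hp]

theorem sum_fireAt_add_sum {m : P → ℕ} {t : T} (h : enabledAt Wm m t) (s : Finset P) :
    ∑ p ∈ s, fireAt Wm Wp m t p + ∑ p ∈ s, Wm p t = ∑ p ∈ s, m p + ∑ p ∈ s, Wp p t := by
  rw [← sum_add_distrib, ← sum_add_distrib]
  refine sum_congr rfl fun p _ => ?_
  have := h p
  simp only [fireAt]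
  omega

/-- Follow the reaction graph backwards from `t•` to `•t`, as weak reversibility allows. -/
theorem weaklyReversible.exists_postBag_eq_preBag (hwr : weaklyReversible Wm Wp) (t : T) :
    ∃ t', postBag Wp t' = preBag Wm t := by
  have hpath := hwr _ _ (Or.inr ⟨t, rfl⟩) (Or.inl ⟨t, rfl⟩)
    (Relation.ReflTransGen.single (Or.inr ⟨t, rfl, rfl⟩))
  rcases hpath.cases_tail with heq | ⟨_, _, t', -, hpre⟩
  · exact ⟨t, heq.symm⟩
  · exact ⟨t', hpre.symm⟩

end Firing

namespace OrderedPiNet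

variable {n : ℕ} {P T : Type*} [Fintype P] [Fintype T] [DecidableEq P] [DecidableEq T]
  (N : OrderedPiNet n P T)

theorem fireAt_apply_of_lvl_ne {m : P → ℕ} {t : T} {p : P} (h₀ : N.lvlP p ≠ N.lvlT t)
    (h₁ : (N.lvlP p : ℕ) + 1 ≠ N.lvlT t) : fireAt N.Wm N.Wp m t p = m p :=
  fireAt_apply_of_eq_zero (not_not.1 fun h => (N.Wm_below t p h).elim h₀ h₁)
    (not_not.1 fun h => (N.Wp_below t p h).elim h₀ h₁)

theorem sum_Wm_lvl_eq_one (t : T) :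
    ∑ p ∈ univ.filter (fun p => N.lvlP p = N.lvlT t), N.Wm p t = 1 := by
  rw [sum_eq_single_of_mem (N.inPlace t) (by simp [N.inPlace_lvl]) fun p hp hne =>
    N.Wm_own t p (by simpa using hp) hne]
  exact N.Wm_in t

theorem sum_Wp_lvl_eq_one (t : T) :
    ∑ p ∈ univ.filter (fun p => N.lvlP p = N.lvlT t), N.Wp p t = 1 := by
  rw [sum_eq_single_of_mem (N.outPlace t) (by simp [N.outPlace_lvl]) fun p hp hne =>
    N.Wp_own t p (by simpa using hp) hne]
  exact N.Wp_out t

/-- `t` consumes and produces exactly one token of its own level. -/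
theorem lvlCount_fireAt_self {m : P → ℕ} {t : T} (h : enabledAt N.Wm m t) :
    N.lvlCount (N.lvlT t) (fireAt N.Wm N.Wp m t) = N.lvlCount (N.lvlT t) m := by
  have := sum_fireAt_add_sum (Wp := N.Wp) h (univ.filter fun p => N.lvlP p = N.lvlT t)
  rw [sum_Wm_lvl_eq_one, sum_Wp_lvl_eq_one] at this
  exact Nat.add_right_cancel this

theorem belowCount_eq_lvlCount {i j : Fin n} (h : (j : ℕ) + 1 = i) (m : P → ℕ) :
    N.belowCount i m = N.lvlCount j m := by
  unfold belowCount lvlCount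
  congr 1
  ext p
  simp only [mem_filter, mem_univ, true_and, Fin.ext_iff]
  omega

theorem belowCount_fireAt_of_ne {i : Fin n} {m : P → ℕ} {t : T} (h : enabledAt N.Wm m t)
    (hi : N.lvlT t ≠ i) :
    N.belowCount i (fireAt N.Wm N.Wp m t) = N.belowCount i m := by
  by_cases hbelow : (N.lvlT t : ℕ) + 1 = i
  · rw [N.belowCount_eq_lvlCount hbelow, N.belowCount_eq_lvlCount hbelow,
      N.lvlCount_fireAt_self h]
  · have hi' : (N.lvlT t : ℕ) ≠ i := Fin.val_ne_of_ne hi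
    refine sum_congr rfl fun p hp => N.fireAt_apply_of_lvl_ne (Fin.ne_of_val_ne ?_) ?_ <;>
      simp only [mem_filter, mem_univ, true_and] at hp <;> omega

theorem potT_outPlace (t : T) :
    N.potT (N.outPlace t) =
      ∑ r ∈ univ.filter (fun r => (N.lvlP r : ℕ) + 1 = N.lvlT t), N.Wp r t := by
  rw [potT, sum_filter, ← N.outPlace_lvl t]
  refine sum_congr rfl fun r _ => ?_
  by_cases h : (N.lvlP r : ℕ) + 1 = N.lvlP (N.outPlace t) ∧
      ∃ t', N.outPlace t' = N.outPlace t ∧ N.Wp r t' ≠ 0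
  · rw [pot, dif_pos h, if_pos h.1]
    exact N.sameOut _ t h.2.choose_spec.1 r
  · rw [pot, dif_neg h]
    split_ifs with hlvl
    · exact (not_not.1 fun hr => h ⟨hlvl, t, rfl, hr⟩).symm
    · rfl

/-- By weak reversibility a place consumed by a transition of the level above is also produced
by one, i.e. it is an interface place. -/
theorem potT_le_of_Wm_ne_zero (h3 : N.isPi3) {p q : P} {t : T}
    (ht : (N.lvlP p : ℕ) + 1 = N.lvlT t) (hp : N.Wm p t ≠ 0) (hq : N.lvlP q = N.lvlP p) :
    N.potT q ≤ N.potT p := by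
  obtain ⟨t', ht'⟩ := N.wr.exists_postBag_eq_preBag t
  have hWp : ∀ r, N.Wp r t' = N.Wm r t := fun r => congrFun ht' r
  have hin : N.Wp (N.inPlace t) t' ≠ 0 := by simp [hWp, N.Wm_in]
  have hout : N.Wp p t' ≠ 0 := by rwa [hWp]
  refine h3 p t' ?_ hout q hq
  have h₁ := N.Wp_below t' _ hin
  have h₂ := N.Wp_below t' p hout
  rw [N.inPlace_lvl, Fin.ext_iff] at h₁
  rw [Fin.ext_iff] at h₂
  omega

theorem lvlCount_eq_zero_iff {i : Fin n} {m : P → ℕ} :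
    N.lvlCount i m = 0 ↔ ∀ p, N.lvlP p = i → m p = 0 := by
  simp [lvlCount, sum_eq_zero_iff]

theorem phi_le_potT {i : Fin n} {m : P → ℕ} {p : P} (hp : N.lvlP p = i) (hm : m p ≠ 0) :
    N.phi i m ≤ N.potT p := by
  have h0 : N.lvlCount i m ≠ 0 := fun h => hm ((N.lvlCount_eq_zero_iff.1 h) p hp)
  rw [phi, if_neg h0]
  exact Nat.sInf_le ⟨p, ⟨hp, hm⟩, rfl⟩

theorem exists_phi_eq_potT {i : Fin n} {m : P → ℕ} (h0 : N.lvlCount i m ≠ 0) :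
    ∃ p, N.lvlP p = i ∧ m p ≠ 0 ∧ N.phi i m = N.potT p := by
  obtain ⟨p, hp, hm⟩ : ∃ p, N.lvlP p = i ∧ m p ≠ 0 := by
    simpa [N.lvlCount_eq_zero_iff] using h0
  rw [phi, if_neg h0]
  obtain ⟨q, ⟨hq, hmq⟩, hφ⟩ :=
    Nat.sInf_mem (s := N.potT '' {p | N.lvlP p = i ∧ m p ≠ 0}) ⟨_, ⟨p, ⟨hp, hm⟩, rfl⟩⟩
  exact ⟨q, hq, hmq, hφ.symm⟩

theorem phi_of_lvlCount_eq_zero {i : Fin n} {m : P → ℕ} (h0 : N.lvlCount i m = 0) :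
    N.phi i m = (univ.filter fun p => N.lvlP p = i).sup N.potT :=
  if_pos h0

theorem phi_le_sup (i : Fin n) (m : P → ℕ) :
    N.phi i m ≤ (univ.filter fun p => N.lvlP p = i).sup N.potT := by
  by_cases h0 : N.lvlCount i m = 0
  · exact (N.phi_of_lvlCount_eq_zero h0).le
  · obtain ⟨p, hp, -, hφ⟩ := N.exists_phi_eq_potT h0
    exact hφ ▸ le_sup (by simpa using hp)

theorem phi_congr {i : Fin n} {m m' : P → ℕ} (h : ∀ p, N.lvlP p = i → m p = m' p) :
    N.phi i m = N.phi i m' := by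
  have hc : N.lvlCount i m = N.lvlCount i m' :=
    sum_congr rfl fun p hp => h p (by simpa using hp)
  have hs : {p | N.lvlP p = i ∧ m p ≠ 0} = {p | N.lvlP p = i ∧ m' p ≠ 0} := by
    ext p
    simp only [Set.mem_ofPred_eq]
    exact and_congr_right fun hp => by rw [h p hp]
  rw [phi, phi, hc, hs]

theorem phi_fireAt_of_ne {i : Fin n} {m : P → ℕ} {t : T} (h₀ : N.lvlT t ≠ i)
    (h₁ : (N.lvlT t : ℕ) ≠ i + 1) : N.phi i (fireAt N.Wm N.Wp m t) = N.phi i m := by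
  refine N.phi_congr fun p hp => N.fireAt_apply_of_lvl_ne ?_ ?_ <;> rw [hp]
  · exact h₀.symm
  · omega

/-- A transition of the level above can empty only places it consumes, and these have maximal
potential. -/
theorem phi_fireAt_le (h3 : N.isPi3) {i : Fin n} {t : T}
    (ht : (N.lvlT t : ℕ) = i + 1) (m : P → ℕ) :
    N.phi i (fireAt N.Wm N.Wp m t) ≤ N.phi i m := by
  by_cases h0 : N.lvlCount i m = 0
  · exact (N.phi_of_lvlCount_eq_zero h0).symm ▸ N.phi_le_sup i _
  obtain ⟨p, hp, hmp, hφ⟩ := N.exists_phi_eq_potT h0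
  rw [hφ]
  by_cases hfire : fireAt N.Wm N.Wp m t p = 0
  · have hW : N.Wm p t ≠ 0 := by
      simp only [fireAt] at hfire
      omega
    refine (N.phi_le_sup i _).trans (Finset.sup_le fun q hq => ?_)
    simp only [mem_filter, mem_univ, true_and] at hq
    exact N.potT_le_of_Wm_ne_zero h3 (by omega) hW (hq.trans hp.symm)
  · exact N.phi_le_potT hp hfire

/-- A transition of level `i` puts `pot(t•)` tokens into the level below and marks its output
place, whose potential bounds `φ_i` from above. -/
theorem phi_fireAt_self_le_belowCount {m : P → ℕ} {t : T} :
    N.phi (N.lvlT t) (fireAt N.Wm N.Wp m t) ≤ N.belowCount (N.lvlT t) (fireAt N.Wm N.Wp m t) :=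
  calc N.phi (N.lvlT t) (fireAt N.Wm N.Wp m t)
      ≤ N.potT (N.outPlace t) :=
        N.phi_le_potT (N.outPlace_lvl t) (by simp [fireAt, N.Wp_out])
    _ = ∑ r ∈ univ.filter (fun r => (N.lvlP r : ℕ) + 1 = N.lvlT t), N.Wp r t := N.potT_outPlace t
    _ ≤ N.belowCount (N.lvlT t) (fireAt N.Wm N.Wp m t) := sum_le_sum fun r _ => le_fireAt m t r

theorem phi_le_belowCount_fireAt (h3 : N.isPi3) {i : Fin n} {m : P → ℕ} {t : T}
    (hphi : N.phi i m ≤ N.belowCount i m) (he : enabledAt N.Wm m t) :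
    N.phi i (fireAt N.Wm N.Wp m t) ≤ N.belowCount i (fireAt N.Wm N.Wp m t) := by
  by_cases hself : N.lvlT t = i
  · exact hself ▸ N.phi_fireAt_self_le_belowCount
  rw [N.belowCount_fireAt_of_ne he hself]
  by_cases habove : (N.lvlT t : ℕ) = i + 1
  · exact (N.phi_fireAt_le h3 habove m).trans hphi
  · rwa [N.phi_fireAt_of_ne hself habove]

end OrderedPiNet

theorem stmt16_general {n : ℕ} {P T : Type*} [Fintype P] [Fintype T] [DecidableEq P]
    [DecidableEq T] (N : OrderedPiNet n P T) (h3 : N.isPi3)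
    (i : Fin n) (m : P → ℕ)
    (hphi : N.phi i m ≤ N.belowCount i m) :
    (∀ (t : T) (m' : P → ℕ), enabledAt N.Wm m t → m' = fireAt N.Wm N.Wp m t →
      N.phi i m' ≤ N.belowCount i m') ∧
    (∀ m', reach N.Wm N.Wp m m' → N.phi i m' ≤ N.belowCount i m') := by
  refine ⟨fun t m' he hm' => hm' ▸ N.phi_le_belowCount_fireAt h3 hphi he, fun m' hreach => ?_⟩
  induction hreach with
  | refl => exact hphi
  | tail _ hstep ih =>
    obtain ⟨t, he, rfl⟩ := hstep
    exact N.phi_le_belowCount_fireAt h3 ih he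

/-- In a Π³-net the condition `φ_i(m) ≤ m(P_{i−1})` is preserved by firing any
transition, hence along all reachable markings. -/
theorem stmt16 {n : ℕ} {P T : Type*} [Fintype P] [Fintype T] [DecidableEq P]
    [DecidableEq T] (N : OrderedPiNet n P T) (h3 : N.isPi3)
    (i : Fin n) (hi : 1 ≤ (i : ℕ)) (m : P → ℕ)
    (hphi : N.phi i m ≤ N.belowCount i m) :
    (∀ (t : T) (m' : P → ℕ), enabledAt N.Wm m t → m' = fireAt N.Wm N.Wp m t →
      N.phi i m' ≤ N.belowCount i m') ∧
    (∀ m', reach N.Wm N.Wp m m' → N.phi i m' ≤ N.belowCount i m') :=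
  stmt16_general N h3 i m hphi
end
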